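/- arXiv:2204.01703 — 6 statements merged into one kernel-verified Lean document; each statement's English description precedes it below -/
import Mathlib

section
/- Let X be a real Banach space and ω : X × X → ℝ a continuous alternating bilinear form. Then the induced map L_ω : X → X*, L_ω(x)(y) = ω(x,y), is an isomorphism onto X* if and only if X is reflexive and L_ω is an isomorphism onto its image (i.e., bounded below). -/
/-!
Antisymmetry of `ω` says that the functional `f ↦ f x` on `X*` restricts to `-ω x` on the range
of `ω`. If `ω` is onto, every `F ∈ X**` is therefore evaluation at the `x` with `ω x = -(F ∘ ω)`,
and the open mapping theorem bounds `ω` below. Conversely, a bounded-below `ω` has closed range;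
an `F ∈ X**` vanishing on that range is evaluation at some `x` by reflexivity, so `ω x = 0`,
hence `x = 0` and `F = 0`, and Hahn–Banach shows the range is all of `X*`.
-/

open NormedSpace

theorem ContinuousLinearMap.exists_antilipschitzWith_iff_exists_pos_mul_norm_le
    {𝕜 E F : Type*} [NontriviallyNormedField 𝕜] [SeminormedAddCommGroup E] [NormedSpace 𝕜 E]
    [SeminormedAddCommGroup F] [NormedSpace 𝕜 F] (f : E →L[𝕜] F) :
    (∃ K, AntilipschitzWith K f) ↔ ∃ c > 0, ∀ x, c * ‖x‖ ≤ ‖f x‖ := by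
  constructor
  · rintro ⟨K, hK⟩
    refine ⟨((K : ℝ) + 1)⁻¹, by positivity, fun x => ?_⟩
    rw [inv_mul_le_iff₀ (by positivity)]
    nlinarith [f.bound_of_antilipschitz hK x, norm_nonneg (f x)]
  · rintro ⟨c, hc, hf⟩
    refine ⟨c⁻¹.toNNReal, f.antilipschitz_of_bound fun x => ?_⟩
    rw [Real.coe_toNNReal _ (by positivity), le_inv_mul_iff₀ hc]
    exact hf x

theorem Submodule.exists_strongDual_ne_zero_of_notMem {𝕜 E : Type*} [RCLike 𝕜]
    [SeminormedAddCommGroup E] [NormedSpace 𝕜 E] {p : Submodule 𝕜 E}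
    (hp : IsClosed (p : Set E)) {v : E} (hv : v ∉ p) :
    ∃ f : StrongDual 𝕜 E, f v ≠ 0 ∧ ∀ x ∈ p, f x = 0 := by
  have hv' : ‖(Submodule.Quotient.mk v : E ⧸ p)‖ ≠ 0 := fun h => hv <| by
    simpa [hp.closure_eq] using
      (QuotientAddGroup.norm_mk_eq_zero_iff_mem_closure (S := p.toAddSubgroup)).mp h
  obtain ⟨g, -, hg⟩ := exists_dual_vector 𝕜 _ hv'
  refine ⟨g.comp p.mkQL, ?_, fun x hx => ?_⟩
  · simpa [hg] using hv'
  · simp [(Submodule.Quotient.mk_eq_zero p).mpr hx]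

section Antisymmetric

variable {X : Type*} [NormedAddCommGroup X] [NormedSpace ℝ X] {ω : X →L[ℝ] StrongDual ℝ X}

theorem inclusionInDoubleDual_comp_eq_neg_of_antisymm (hω : ∀ x y, ω x y = -ω y x) (x : X) :
    (inclusionInDoubleDual ℝ X x).comp ω = -ω x := by
  ext y
  simp [hω y x]

theorem surjective_inclusionInDoubleDual_of_antisymm_of_surjective (hω : ∀ x y, ω x y = -ω y x)
    (hsurj : Function.Surjective ω) :
    Function.Surjective (inclusionInDoubleDual ℝ X) := by
  intro F
  obtain ⟨x, hx⟩ := hsurj (-F.comp ω)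
  refine ⟨x, ContinuousLinearMap.ext fun f => ?_⟩
  obtain ⟨y, rfl⟩ := hsurj f
  simpa [hx] using congr($(inclusionInDoubleDual_comp_eq_neg_of_antisymm hω x) y)

theorem eq_zero_of_comp_eq_zero_of_antisymm (hω : ∀ x y, ω x y = -ω y x)
    (hrefl : Function.Surjective (inclusionInDoubleDual ℝ X)) (hinj : Function.Injective ω)
    {F : StrongDual ℝ (StrongDual ℝ X)} (hF : F.comp ω = 0) : F = 0 := by
  obtain ⟨x, rfl⟩ := hrefl F
  have hx : ω x = 0 := by
    rw [← neg_eq_zero, ← inclusionInDoubleDual_comp_eq_neg_of_antisymm hω, hF]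
  rw [hinj (hx.trans ω.map_zero.symm), map_zero]

theorem surjective_of_antisymm_of_injective_of_isClosed_range (hω : ∀ x y, ω x y = -ω y x)
    (hrefl : Function.Surjective (inclusionInDoubleDual ℝ X)) (hinj : Function.Injective ω)
    (hclosed : IsClosed (Set.range ω)) : Function.Surjective ω := by
  intro f
  by_contra hf
  have hrange :
      IsClosed (LinearMap.range (ω : X →ₗ[ℝ] StrongDual ℝ X) : Set (StrongDual ℝ X)) := by
    rwa [LinearMap.coe_range, ContinuousLinearMap.coe_coe]
  obtain ⟨F, hFf, hF⟩ := Submodule.exists_strongDual_ne_zero_of_notMem hrange (v := f)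
    (by simpa using hf)
  have hFω : F.comp ω = 0 := ContinuousLinearMap.ext fun y => hF _ ⟨y, rfl⟩
  exact hFf (by rw [eq_zero_of_comp_eq_zero_of_antisymm hω hrefl hinj hFω, zero_apply])

end Antisymmetric

/-- For a continuous alternating bilinear form ω on a real Banach space X,
the induced map L_ω : X → X* is an isomorphism onto X* iff X is reflexive and L_ω is
an isomorphism onto its image (bounded below). -/
theorem stmt0 {X : Type*} [NormedAddCommGroup X] [NormedSpace ℝ X] [CompleteSpace X]
    (ω : X →L[ℝ] X →L[ℝ] ℝ) (halt : ∀ x y, ω x y = -ω y x) :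
    Function.Bijective ω ↔
      (Function.Surjective (NormedSpace.inclusionInDoubleDual ℝ X) ∧
        ∃ c > 0, ∀ x, c * ‖x‖ ≤ ‖ω x‖) := by
  rw [← ω.exists_antilipschitzWith_iff_exists_pos_mul_norm_le]
  constructor
  · rintro ⟨hinj, hsurj⟩
    refine ⟨surjective_inclusionInDoubleDual_of_antisymm_of_surjective halt hsurj,
      ω.antilipschitz_of_injective_of_isClosed_range hinj ?_⟩
    rw [hsurj.range_eq]
    exact isClosed_univ
  · rintro ⟨hrefl, K, hK⟩
    exact ⟨hK.injective, surjective_of_antisymm_of_injective_of_isClosed_range halt hrefl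
      hK.injective (hK.isClosed_range ω.uniformContinuous)⟩
end

section
/- If (X, ω) is a symplectic Banach space (ω continuous, alternating, and L_ω : X → X* an onto isomorphism), then X is reflexive. -/
/-- If (X, ω) is a symplectic Banach space then X is reflexive. -/
theorem stmt1 {X : Type*} [NormedAddCommGroup X] [NormedSpace ℝ X] [CompleteSpace X]
    (ω : X →L[ℝ] X →L[ℝ] ℝ) (halt : ∀ x y, ω x y = -ω y x)
    (hbij : Function.Bijective ω) :
    Function.Surjective (NormedSpace.inclusionInDoubleDual ℝ X) := by
  intro Ψ
  obtain ⟨x, hx⟩ := hbij.2 (-(Ψ.comp ω))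
  refine ⟨x, ?_⟩
  ext g
  obtain ⟨y, rfl⟩ := hbij.2 g
  have := congrArg (fun f => f y) hx
  simp only [ContinuousLinearMap.neg_apply, ContinuousLinearMap.comp_apply] at this
  simp [NormedSpace.inclusionInDoubleDual, halt y x]
  linarith [this]
end

section
/- Let (X, ω) be a real symplectic Banach space and F a closed subspace of X. Then the restriction of ω to F × F makes F a symplectic space if and only if X = F ⊕ F^ω, where F^ω = {x ∈ X : ω(x,y) = 0 for all y ∈ F} is the symplectic orthogonal of F. -/
/-!
Two elements of `X` induce the same functional on `F` exactly when their difference lies in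
`F^ω`. Hence the restriction map `F → F*` is injective iff `F ∩ F^ω = 0`, and it is surjective
iff `F + F^ω = X`: given `g ∈ F*`, extend it to `X` by Hahn–Banach, write the extension as
`ω x` using that `ω` is onto, and split `x` along `F + F^ω`.
-/

/-- The symplectic orthogonal of a subspace. -/
def sympOrth {X : Type*} [NormedAddCommGroup X] [NormedSpace ℝ X]
    (ω : X →L[ℝ] X →L[ℝ] ℝ) (F : Submodule ℝ X) : Submodule ℝ X where
  carrier := {x | ∀ y ∈ F, ω x y = 0}
  add_mem' := by
    intro a b ha hb y hy
    simp [map_add, ContinuousLinearMap.add_apply, ha y hy, hb y hy]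
  zero_mem' := by intro y hy; simp
  smul_mem' := by
    intro c a ha y hy
    simp [map_smul, ContinuousLinearMap.smul_apply, ha y hy]

namespace sympOrth

variable {X : Type*} [NormedAddCommGroup X] [NormedSpace ℝ X]
  (ω : X →L[ℝ] X →L[ℝ] ℝ) (F : Submodule ℝ X)

theorem restrict_eq_restrict_iff_sub_mem (a b : X) :
    (ω a).comp F.subtypeL = (ω b).comp F.subtypeL ↔ a - b ∈ sympOrth ω F := by
  refine ⟨fun h y hy => ?_, fun h => ?_⟩
  · simpa [sub_eq_zero] using DFunLike.congr_fun h ⟨y, hy⟩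
  · ext y
    simpa [sub_eq_zero] using h y y.2

theorem injective_restrict_iff_disjoint :
    Function.Injective (fun f : F => (ω (f : X)).comp F.subtypeL) ↔
      Disjoint F (sympOrth ω F) := by
  rw [Submodule.disjoint_def]
  refine ⟨fun hinj x hxF hxO => ?_, fun hdisj a b hab => ?_⟩
  · have h : (⟨x, hxF⟩ : F) = 0 :=
      hinj <| (restrict_eq_restrict_iff_sub_mem ω F x 0).2 (by simpa using hxO)
    simpa using congrArg Subtype.val h
  · have hab' := (restrict_eq_restrict_iff_sub_mem ω F a b).1 hab
    exact Subtype.ext <| sub_eq_zero.1 <| hdisj _ (sub_mem a.2 b.2) hab'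

theorem surjective_restrict_iff_codisjoint (hω : Function.Surjective ω) :
    Function.Surjective (fun f : F => (ω (f : X)).comp F.subtypeL) ↔
      Codisjoint F (sympOrth ω F) := by
  rw [Submodule.codisjoint_iff_exists_add_eq]
  refine ⟨fun hsurj x => ?_, fun hcodisj g => ?_⟩
  · obtain ⟨f, hf⟩ := hsurj ((ω x).comp F.subtypeL)
    exact ⟨f, x - f, f.2, (restrict_eq_restrict_iff_sub_mem ω F x f).1 hf.symm,
      add_sub_cancel _ _⟩
  · obtain ⟨G, hG, -⟩ := exists_extension_norm_eq F g
    obtain ⟨x, rfl⟩ := hω G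
    obtain ⟨f, h, hf, hh, rfl⟩ := hcodisj x
    refine ⟨⟨f, hf⟩, ?_⟩
    have hrestrict : (ω f).comp F.subtypeL = (ω (f + h)).comp F.subtypeL :=
      (restrict_eq_restrict_iff_sub_mem ω F f (f + h)).2 (by simpa using neg_mem hh)
    refine hrestrict.trans ?_
    ext y
    exact hG y

end sympOrth

theorem stmt3_general {X : Type*} [NormedAddCommGroup X] [NormedSpace ℝ X]
    (ω : X →L[ℝ] X →L[ℝ] ℝ)
    (hbij : Function.Bijective ω)
    (F : Submodule ℝ X) :
    Function.Bijective (fun f : F => (ω (f : X)).comp F.subtypeL) ↔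
      IsCompl F (sympOrth ω F) := by
  rw [Function.Bijective, sympOrth.injective_restrict_iff_disjoint,
    sympOrth.surjective_restrict_iff_codisjoint ω F hbij.surjective, isCompl_iff]

/-- A closed subspace F of a symplectic Banach space (X,ω) is symplectic
for the restricted form iff X = F ⊕ F^ω. -/
theorem stmt3 {X : Type*} [NormedAddCommGroup X] [NormedSpace ℝ X] [CompleteSpace X]
    (ω : X →L[ℝ] X →L[ℝ] ℝ) (halt : ∀ x y, ω x y = -ω y x)
    (hbij : Function.Bijective ω)
    (F : Submodule ℝ X) (hF : IsClosed (F : Set X)) :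
    Function.Bijective (fun f : F => (ω (f : X)).comp F.subtypeL) ↔
      IsCompl F (sympOrth ω F) :=
  stmt3_general ω hbij F
end

section
/- Let (X, ω) be a real symplectic Banach space and H a closed hyperplane of X. Then there exists a closed subspace H' ⊆ H of codimension 1 in H such that (H', ω|_{H'×H'}) is symplectic. -/
/-!
If `ω x₀ = g`, then `ω x₀ x₀ = 0` puts `x₀` in `H = ker g`, and any `x₁ ∉ H` has
`ω x₀ x₁ ≠ 0`. The ω-orthogonal `H'` of the plane spanned by `x₀, x₁` is a hyperplane of `H`
(cut out by `ω x₁`, which is nonzero at `x₀`), and `X = H' ⊕ span {x₀, x₁}`. Since the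
projection onto `H'` along this plane does not change `ω` against vectors of `H'`, injectivity of
`ω` passes to `H'`, and a functional on `H'` is represented by projecting a representative of a
Hahn–Banach extension.
-/

theorem Submodule.finrank_quotient_comap_inf_ker_eq_one {K M : Type*} [Field K] [AddCommGroup M]
    [Module K M] (N : Submodule K M) (f : M →ₗ[K] K) {x : M} (hxN : x ∈ N) (hfx : f x ≠ 0) :
    Module.finrank K (N ⧸ (N ⊓ LinearMap.ker f).comap N.subtype) = 1 := by
  have hker : (N ⊓ LinearMap.ker f).comap N.subtype = LinearMap.ker (f ∘ₗ N.subtype) := by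
    rw [Submodule.comap_inf, Submodule.comap_subtype_self, top_inf_eq, LinearMap.ker_comp]
  have hne : f ∘ₗ N.subtype ≠ 0 := fun h => hfx (by simpa using LinearMap.congr_fun h ⟨x, hxN⟩)
  rw [hker, ((f ∘ₗ N.subtype).quotKerEquivOfSurjective
    (LinearMap.surjective_of_ne_zero hne)).finrank_eq, Module.finrank_self]

namespace ContinuousLinearMap

variable {X : Type*} [NormedAddCommGroup X] [NormedSpace ℝ X] (ω : X →L[ℝ] X →L[ℝ] ℝ)

def IsSymplecticSubspace (V : Submodule ℝ X) : Prop :=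
  Function.Bijective fun v : V => (ω v).comp V.subtypeL

noncomputable def pairOrthogonal (x₀ x₁ : X) : Submodule ℝ X :=
  LinearMap.ker (ω x₀ : X →ₗ[ℝ] ℝ) ⊓ LinearMap.ker (ω x₁ : X →ₗ[ℝ] ℝ)

/-- The projection onto `pairOrthogonal ω x₀ x₁` along `span {x₀, x₁}`. -/
noncomputable def pairOrthogonalProj (x₀ x₁ y : X) : X :=
  y + (ω x₁ y / ω x₀ x₁) • x₀ - (ω x₀ y / ω x₀ x₁) • x₁

variable {ω} {x₀ x₁ : X}

theorem mem_pairOrthogonal {y : X} : y ∈ pairOrthogonal ω x₀ x₁ ↔ ω x₀ y = 0 ∧ ω x₁ y = 0 :=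
  Iff.rfl

theorem isClosed_pairOrthogonal : IsClosed (pairOrthogonal ω x₀ x₁ : Set X) :=
  (ω x₀).isClosed_ker.inter (ω x₁).isClosed_ker

theorem pairOrthogonalProj_mem (halt : ∀ x y, ω x y = -ω y x) (hc : ω x₀ x₁ ≠ 0) (y : X) :
    pairOrthogonalProj ω x₀ x₁ y ∈ pairOrthogonal ω x₀ x₁ := by
  have hzero : ∀ x, ω x x = 0 := fun x => by linarith [halt x x]
  rw [mem_pairOrthogonal, pairOrthogonalProj]
  simp only [map_sub, map_add, map_smul, smul_eq_mul, hzero, halt x₁ x₀]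
  constructor <;> field_simp <;> ring

theorem pairOrthogonalProj_apply_of_mem {v : X} (hv : v ∈ pairOrthogonal ω x₀ x₁) (z : X) :
    ω (pairOrthogonalProj ω x₀ x₁ z) v = ω z v := by
  obtain ⟨h₀, h₁⟩ := mem_pairOrthogonal.mp hv
  simp [pairOrthogonalProj, h₀, h₁]

theorem apply_pairOrthogonalProj_of_mem (halt : ∀ x y, ω x y = -ω y x) {u : X}
    (hu : u ∈ pairOrthogonal ω x₀ x₁) (y : X) :
    ω u (pairOrthogonalProj ω x₀ x₁ y) = ω u y := by
  rw [halt, pairOrthogonalProj_apply_of_mem hu, ← halt]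

theorem isSymplecticSubspace_pairOrthogonal (halt : ∀ x y, ω x y = -ω y x)
    (hbij : Function.Bijective ω) (hc : ω x₀ x₁ ≠ 0) :
    IsSymplecticSubspace ω (pairOrthogonal ω x₀ x₁) := by
  have hproj := pairOrthogonalProj_mem halt hc
  constructor
  · intro u v huv
    have hagree : ∀ y, ω u (pairOrthogonalProj ω x₀ x₁ y) = ω v (pairOrthogonalProj ω x₀ x₁ y) :=
      fun y => congr($huv ⟨_, hproj y⟩)
    refine Subtype.ext (hbij.1 (ext fun y => ?_))
    rw [← apply_pairOrthogonalProj_of_mem halt u.2, ← apply_pairOrthogonalProj_of_mem halt v.2,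
      hagree]
  · intro φ
    obtain ⟨ψ, hψ, -⟩ := exists_extension_norm_eq _ φ
    obtain ⟨z, rfl⟩ := hbij.2 ψ
    exact ⟨⟨_, hproj z⟩, ext fun y => (pairOrthogonalProj_apply_of_mem y.2 z).trans (hψ y)⟩

end ContinuousLinearMap

theorem stmt8_general {X : Type*} [NormedAddCommGroup X] [NormedSpace ℝ X]
    (ω : X →L[ℝ] X →L[ℝ] ℝ) (halt : ∀ x y, ω x y = -ω y x)
    (hbij : Function.Bijective ω)
    (g : X →L[ℝ] ℝ) (hg : g ≠ 0) :
    ∃ H' : Submodule ℝ X, H' ≤ LinearMap.ker (g : X →ₗ[ℝ] ℝ) ∧ IsClosed (H' : Set X) ∧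
      Module.finrank ℝ
        (LinearMap.ker (g : X →ₗ[ℝ] ℝ) ⧸ H'.comap (LinearMap.ker (g : X →ₗ[ℝ] ℝ)).subtype) = 1 ∧
      Function.Bijective (fun f : H' => (ω (f : X)).comp H'.subtypeL) := by
  obtain ⟨x₀, rfl⟩ := hbij.2 g
  obtain ⟨x₁, hx₁⟩ := DFunLike.ne_iff.mp hg
  have hc : ω x₀ x₁ ≠ 0 := hx₁
  have hx₀ : ω x₀ x₀ = 0 := by linarith [halt x₀ x₀]
  refine ⟨ω.pairOrthogonal x₀ x₁, inf_le_left, ContinuousLinearMap.isClosed_pairOrthogonal, ?_,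
    ContinuousLinearMap.isSymplecticSubspace_pairOrthogonal halt hbij hc⟩
  refine Submodule.finrank_quotient_comap_inf_ker_eq_one _ (ω x₁ : X →ₗ[ℝ] ℝ) hx₀ ?_
  simpa [halt x₁ x₀] using hc

/-- Every closed hyperplane H of a real symplectic Banach space contains
a closed subspace H' of codimension 1 in H which is symplectic for the restricted form. -/
theorem stmt8 {X : Type*} [NormedAddCommGroup X] [NormedSpace ℝ X] [CompleteSpace X]
    (ω : X →L[ℝ] X →L[ℝ] ℝ) (halt : ∀ x y, ω x y = -ω y x)
    (hbij : Function.Bijective ω)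
    (g : X →L[ℝ] ℝ) (hg : g ≠ 0) :
    ∃ H' : Submodule ℝ X, H' ≤ LinearMap.ker (g : X →ₗ[ℝ] ℝ) ∧ IsClosed (H' : Set X) ∧
      Module.finrank ℝ
        (LinearMap.ker (g : X →ₗ[ℝ] ℝ) ⧸ H'.comap (LinearMap.ker (g : X →ₗ[ℝ] ℝ)).subtype) = 1 ∧
      Function.Bijective (fun f : H' => (ω (f : X)).comp H'.subtypeL) :=
  stmt8_general ω halt hbij g hg
end

section
/- Let ℋ be a real Hilbert space and J : ℋ → ℋ a bounded operator with J² = -I (a complex structure). Then ⟨x,y⟩_R := ⟨x, (I + J*J)y⟩ defines an equivalent inner product on ℋ for which J is a unitary with R-adjoint -J, and ω(x,y) := ⟨x, Jy⟩_R is a symplectic form on ℋ. -/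
/-!
Writing `⟪x, y⟫_R = ⟪x, y⟫ + ⟪J x, J y⟫`, the algebraic claims all follow from `J² = -1`, and
`‖x‖² ≤ ⟪x, x⟫_R ≤ (1 + ‖J‖²) ‖x‖²`. Nondegeneracy of `ω` comes from Lax–Milgram: `⟪·, ·⟫_R` is
coercive, so `⟪x, ·⟫_R = ⟪Φ x, ·⟫` for an isomorphism `Φ`, hence `ω x = ⟪J† (Φ x), ·⟫`, and `J†` is
invertible because `(J†)² = -1`.
-/

open RealInnerProductSpace

namespace ContinuousLinearMap

section ComplexStructure

variable {R M : Type*} [Ring R] [TopologicalSpace M] [AddCommGroup M] [IsTopologicalAddGroup M]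
  [Module R M] {J : M →L[R] M}

lemma apply_apply_of_comp_self_eq_neg_id (hJ : J.comp J = -ContinuousLinearMap.id R M) (x : M) :
    J (J x) = -x := by
  simpa using congr($hJ x)

lemma bijective_of_comp_self_eq_neg_id (hJ : J.comp J = -ContinuousLinearMap.id R M) :
    Function.Bijective J := by
  refine Function.bijective_iff_has_inverse.mpr ⟨fun x => -J x, fun x => ?_, fun x => ?_⟩ <;>
    simp [apply_apply_of_comp_self_eq_neg_id hJ]

end ComplexStructure

variable {H : Type*} [NormedAddCommGroup H] [InnerProductSpace ℝ H]

lemma adjoint_comp_self_eq_neg_id [CompleteSpace H] {J : H →L[ℝ] H}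
    (hJ : J.comp J = -ContinuousLinearMap.id ℝ H) :
    (adjoint J).comp (adjoint J) = -ContinuousLinearMap.id ℝ H := by
  rw [← adjoint_comp, hJ, map_neg, adjoint_id]

/-- The form `⟪x, (1 + J† J) y⟫`, with the adjoint moved across the inner product. -/
noncomputable def complexStructureInner (J : H →L[ℝ] H) : H →L[ℝ] H →L[ℝ] ℝ :=
  innerSL ℝ + (innerSL ℝ).bilinearComp J J

variable (J : H →L[ℝ] H)

@[simp]
lemma complexStructureInner_apply (x y : H) :
    complexStructureInner J x y = ⟪x, y⟫ + ⟪J x, J y⟫ := rfl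

lemma complexStructureInner_comm (x y : H) :
    complexStructureInner J x y = complexStructureInner J y x := by
  simp only [complexStructureInner_apply, real_inner_comm]

lemma complexStructureInner_self (x : H) :
    complexStructureInner J x x = ‖x‖ ^ 2 + ‖J x‖ ^ 2 := by
  simp only [complexStructureInner_apply, real_inner_self_eq_norm_sq]

lemma norm_sq_le_complexStructureInner_self (x : H) :
    ‖x‖ ^ 2 ≤ complexStructureInner J x x := by
  rw [complexStructureInner_self]
  exact le_add_of_nonneg_right (sq_nonneg _)

lemma complexStructureInner_self_le (x : H) :
    complexStructureInner J x x ≤ (1 + ‖J‖ ^ 2) * ‖x‖ ^ 2 := by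
  have hJx : ‖J x‖ ^ 2 ≤ (‖J‖ * ‖x‖) ^ 2 := by gcongr; exact J.le_opNorm x
  rw [complexStructureInner_self]
  linarith

lemma isCoercive_complexStructureInner : IsCoercive (complexStructureInner J) :=
  ⟨1, one_pos, fun x => by simpa [sq] using norm_sq_le_complexStructureInner_self J x⟩

variable {J} (hJ : J.comp J = -ContinuousLinearMap.id ℝ H)
include hJ

lemma complexStructureInner_map_map (x y : H) :
    complexStructureInner J (J x) (J y) = complexStructureInner J x y := by
  simp only [complexStructureInner_apply, apply_apply_of_comp_self_eq_neg_id hJ, inner_neg_neg]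
  ring

lemma complexStructureInner_map_left (x y : H) :
    complexStructureInner J (J x) y = -complexStructureInner J x (J y) := by
  rw [← complexStructureInner_map_map hJ x, apply_apply_of_comp_self_eq_neg_id hJ, map_neg,
    neg_neg]

lemma complexStructureInner_map_right_antisymm (x y : H) :
    complexStructureInner J x (J y) = -complexStructureInner J y (J x) := by
  rw [← complexStructureInner_map_left hJ, complexStructureInner_comm]

end ContinuousLinearMap

open ContinuousLinearMap in
lemma IsCoercive.bijective_bilinearComp_id {H : Type*} [NormedAddCommGroup H]
    [InnerProductSpace ℝ H] [CompleteSpace H] {B : H →L[ℝ] H →L[ℝ] ℝ} (hB : IsCoercive B)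
    {T : H →L[ℝ] H} (hT : Function.Bijective (adjoint T)) :
    Function.Bijective (B.bilinearComp (ContinuousLinearMap.id ℝ H) T) := by
  have hω : ⇑(B.bilinearComp (ContinuousLinearMap.id ℝ H) T) =
      InnerProductSpace.toDual ℝ H ∘ adjoint T ∘ hB.continuousLinearEquivOfBilin := by
    ext x y
    simp [adjoint_inner_left, hB.continuousLinearEquivOfBilin_apply]
  rw [hω]
  exact (InnerProductSpace.toDual ℝ H).bijective.comp
    (hT.comp hB.continuousLinearEquivOfBilin.bijective)

/-- If J is a complex structure (J² = -I) on a real Hilbert space ℋ, then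
⟨x,y⟩_R := ⟨x, (I + J*J)y⟩ is an equivalent inner product for which J is unitary with
R-adjoint -J, and ω(x,y) := ⟨x, Jy⟩_R is a symplectic form on ℋ. -/
theorem stmt16 {H : Type*} [NormedAddCommGroup H] [InnerProductSpace ℝ H]
    [CompleteSpace H] (J : H →L[ℝ] H)
    (hJ : J.comp J = -ContinuousLinearMap.id ℝ H)
    (innR : H → H → ℝ)
    (hinnR : ∀ x y, innR x y = ⟪x, y + (ContinuousLinearMap.adjoint J) (J y)⟫) :
    (∀ x y, innR x y = innR y x) ∧
    (∀ (a b : ℝ) (x x' y : H), innR (a • x + b • x') y = a * innR x y + b * innR x' y) ∧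
    (∃ c > 0, ∃ C > 0, ∀ x, c * ‖x‖ ^ 2 ≤ innR x x ∧ innR x x ≤ C * ‖x‖ ^ 2) ∧
    (∀ x y, innR (J x) (J y) = innR x y) ∧
    (∀ x y, innR (J x) y = -innR x (J y)) ∧
    ∃ ω : H →L[ℝ] H →L[ℝ] ℝ, (∀ x y, ω x y = innR x (J y)) ∧
      (∀ x y, ω x y = -ω y x) ∧ Function.Bijective ω := by
  open ContinuousLinearMap in
  obtain rfl : innR = fun x y => complexStructureInner J x y := by
    funext x y
    rw [hinnR, inner_add_right, adjoint_inner_right, complexStructureInner_apply]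
  refine ⟨complexStructureInner_comm J, fun a b x x' y => by simp, ?_,
    complexStructureInner_map_map hJ, complexStructureInner_map_left hJ,
    (complexStructureInner J).bilinearComp (ContinuousLinearMap.id ℝ H) J, fun _ _ => rfl,
    complexStructureInner_map_right_antisymm hJ, ?_⟩
  · refine ⟨1, one_pos, 1 + ‖J‖ ^ 2, by positivity, fun x => ⟨?_, ?_⟩⟩
    · rw [one_mul]
      exact norm_sq_le_complexStructureInner_self J x
    · exact complexStructureInner_self_le J x
  · exact (isCoercive_complexStructureInner J).bijective_bilinearComp_id
      (bijective_of_comp_self_eq_neg_id (adjoint_comp_self_eq_neg_id hJ))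
end

section
/- Let X, Y be Banach spaces, j : Y → X an isomorphism onto its image, ω a symplectic form on Y, and Ω a continuous bilinear form on X with Ω(jx, jy) = ω(x,y) for all x, y ∈ Y. Then j(Y) is a complemented subspace of X; indeed j ∘ L_ω⁻¹ ∘ j* ∘ L_Ω is a bounded projection of X onto j(Y). -/
/-!
Pairing with `Ω` and restricting to `Y` gives `j* ∘ L_Ω : X → Y*`, and the extension condition
says that this map sends `j y` to `L_ω y`. Since `L_ω` is a bounded bijection between Banach
spaces, it has a bounded inverse, so `q = L_ω⁻¹ ∘ j* ∘ L_Ω` is a bounded left inverse of `j`;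
then `j ∘ q` is a bounded projection onto `j(Y)`.
-/

namespace ContinuousLinearMap

variable {𝕜 X Y : Type*} [NontriviallyNormedField 𝕜]
  [NormedAddCommGroup X] [NormedSpace 𝕜 X] [NormedAddCommGroup Y] [NormedSpace 𝕜 Y]

theorem exists_projection_range_eq_of_comp_eq_id (j : Y →L[𝕜] X) (q : X →L[𝕜] Y)
    (hq : q.comp j = ContinuousLinearMap.id 𝕜 Y) :
    ∃ P : X →L[𝕜] X, P.comp P = P ∧
      LinearMap.range (P : X →ₗ[𝕜] X) = LinearMap.range (j : Y →ₗ[𝕜] X) := by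
  refine ⟨j.comp q, by rw [comp_assoc, ← comp_assoc q, hq, id_comp], ?_⟩
  have hq_surj : LinearMap.range (q : X →ₗ[𝕜] Y) = ⊤ :=
    LinearMap.range_eq_top.2 fun y ↦ ⟨j y, congr($hq y)⟩
  exact LinearMap.range_comp_of_range_eq_top (j : Y →ₗ[𝕜] X) hq_surj

variable [CompleteSpace 𝕜] [CompleteSpace Y]

noncomputable def symplecticRetraction (ω : Y →L[𝕜] Y →L[𝕜] 𝕜) (hω : Function.Bijective ω)
    (Ω : X →L[𝕜] X →L[𝕜] 𝕜) (j : Y →L[𝕜] X) : X →L[𝕜] Y :=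
  ((ContinuousLinearEquiv.ofBijective ω (LinearMap.ker_eq_bot.2 hω.1)
      (LinearMap.range_eq_top.2 hω.2)).symm : (Y →L[𝕜] 𝕜) →L[𝕜] Y).comp
    ((precomp 𝕜 j).comp Ω)

theorem symplecticRetraction_comp (ω : Y →L[𝕜] Y →L[𝕜] 𝕜) (hω : Function.Bijective ω)
    (Ω : X →L[𝕜] X →L[𝕜] 𝕜) (j : Y →L[𝕜] X) (hext : ∀ a b : Y, Ω (j a) (j b) = ω a b) :
    (symplecticRetraction ω hω Ω j).comp j = ContinuousLinearMap.id 𝕜 Y := by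
  ext y
  have hrestrict : precomp 𝕜 j (Ω (j y)) = ω y := by
    ext z
    simp [hext]
  simp [symplecticRetraction, hrestrict]

end ContinuousLinearMap

theorem stmt17_general {X Y : Type*} [NormedAddCommGroup X] [NormedSpace ℝ X]
    [NormedAddCommGroup Y] [NormedSpace ℝ Y] [CompleteSpace Y]
    (j : Y →L[ℝ] X)
    (ω : Y →L[ℝ] Y →L[ℝ] ℝ)
    (hbij : Function.Bijective ω)
    (Ω : X →L[ℝ] X →L[ℝ] ℝ) (hext : ∀ a b : Y, Ω (j a) (j b) = ω a b) :
    ∃ P : X →L[ℝ] X, P.comp P = P ∧ LinearMap.range (P : X →ₗ[ℝ] X) = LinearMap.range (j : Y →ₗ[ℝ] X) :=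
  ContinuousLinearMap.exists_projection_range_eq_of_comp_eq_id j _
    (ContinuousLinearMap.symplecticRetraction_comp ω hbij Ω j hext)

/-- If a symplectic form ω on Y extends to a continuous bilinear form Ω
on X through an into-isomorphism j : Y → X, then j(Y) is complemented in X. -/
theorem stmt17 {X Y : Type*} [NormedAddCommGroup X] [NormedSpace ℝ X] [CompleteSpace X]
    [NormedAddCommGroup Y] [NormedSpace ℝ Y] [CompleteSpace Y]
    (j : Y →L[ℝ] X) (hj : ∃ c > 0, ∀ y, c * ‖y‖ ≤ ‖j y‖)
    (ω : Y →L[ℝ] Y →L[ℝ] ℝ) (halt : ∀ a b, ω a b = -ω b a)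
    (hbij : Function.Bijective ω)
    (Ω : X →L[ℝ] X →L[ℝ] ℝ) (hext : ∀ a b : Y, Ω (j a) (j b) = ω a b) :
    ∃ P : X →L[ℝ] X, P.comp P = P ∧ LinearMap.range (P : X →ₗ[ℝ] X) = LinearMap.range (j : Y →ₗ[ℝ] X) :=
  stmt17_general j ω hbij Ω hext
end
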